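/- Let Γ be a connected, locally finite, accessible graph with Aut(Γ)\Γ finite. Then: (1) for every C ∈ C_opt the block B[C] is connected; (2) there is a number ℓ ∈ ℕ such that for all C ∈ C_opt and all S ⊆ B[C]: whenever two vertices u, v ∈ B[C] \ N^ℓS can be connected by a path in Γ − N^ℓS, they can be connected by a path in B[C] \ S. -/

import Mathlib

open Pointwise

universe u

namespace CFGroups

variable {V : Type u}

/-- The edge boundary of `C`: adjacent ordered pairs `(u,v)` with `u ∈ C`, `v ∉ C`.
These are in canonical bijection with the undirected edges of `δC`. -/
def edgeBoundary (G : SimpleGraph V) (C : Set V) : Set (V × V) :=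
  {p : V × V | G.Adj p.1 p.2 ∧ p.1 ∈ C ∧ p.2 ∉ C}

/-- The vertex boundary `βC`: endpoints of edges of `δC`. -/
def vertexBoundary (G : SimpleGraph V) (C : Set V) : Set V :=
  {u : V | ∃ v : V, G.Adj u v ∧ ((u ∈ C ∧ v ∉ C) ∨ (v ∈ C ∧ u ∉ C))}

/-- A cut: `C` and its complement are nonempty and connected, and `δC` is finite. -/
def IsCut (G : SimpleGraph V) (C : Set V) : Prop :=
  C.Nonempty ∧ Cᶜ.Nonempty ∧ (G.induce C).Connected ∧ (G.induce Cᶜ).Connected ∧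
    (edgeBoundary G C).Finite

/-- The weight `|δC|` of a cut. -/
noncomputable def weight (G : SimpleGraph V) (C : Set V) : ℕ :=
  (edgeBoundary G C).ncard

/-- A `k`-cut: a cut of weight at most `k`. -/
def IsCutLe (G : SimpleGraph V) (k : ℕ) (C : Set V) : Prop :=
  IsCut G C ∧ weight G C ≤ k

/-- Two cuts are nested. -/
def Nested (C D : Set V) : Prop :=
  C ⊆ D ∨ C ⊆ Dᶜ ∨ Cᶜ ⊆ D ∨ Cᶜ ⊆ Dᶜ

/-- A bi-infinite simple path, as an injective `ℤ`-indexed sequence of successively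
adjacent vertices. -/
def IsBiInfinitePath (G : SimpleGraph V) (α : ℤ → V) : Prop :=
  Function.Injective α ∧ ∀ i : ℤ, G.Adj (α i) (α (i + 1))

/-- A one-sided infinite simple path. -/
def IsRayPath (G : SimpleGraph V) (γ : ℕ → V) : Prop :=
  Function.Injective γ ∧ ∀ i : ℕ, G.Adj (γ i) (γ (i + 1))

/-- `C(α)`: the cuts splitting the bi-infinite simple path `α` into two infinite pieces. -/
def cutsSplitting (G : SimpleGraph V) (α : ℤ → V) : Set (Set V) :=
  {C : Set V | IsCut G C ∧ (Set.range α ∩ C).Infinite ∧ (Set.range α ∩ Cᶜ).Infinite}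

/-- `C_min(α)`: the cuts of minimal weight in `C(α)`. -/
def cutsMin (G : SimpleGraph V) (α : ℤ → V) : Set (Set V) :=
  {C ∈ cutsSplitting G α | ∀ D ∈ cutsSplitting G α, weight G C ≤ weight G D}

/-- `Γ` is accessible with constant `k`: every bi-infinite simple path with `C(α) ≠ ∅`
admits a `k`-cut in `C(α)`. -/
def AccessibleWith (G : SimpleGraph V) (k : ℕ) : Prop :=
  ∀ α : ℤ → V, IsBiInfinitePath G α → (cutsSplitting G α).Nonempty →
    ∃ C ∈ cutsSplitting G α, weight G C ≤ k

/-- An accessible graph. -/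
def Accessible (G : SimpleGraph V) : Prop := ∃ k : ℕ, AccessibleWith G k

/-- `m(C)`: the number of `k`-cuts not nested with `C`. -/
noncomputable def mdeg (G : SimpleGraph V) (k : ℕ) (C : Set V) : ℕ :=
  Set.ncard {D : Set V | IsCutLe G k D ∧ ¬ Nested C D}

/-- `C_opt(α)`: the cuts of `C_min(α)` minimizing `m`. -/
def cutsOpt (G : SimpleGraph V) (k : ℕ) (α : ℤ → V) : Set (Set V) :=
  {C ∈ cutsMin G α | ∀ D ∈ cutsMin G α, mdeg G k C ≤ mdeg G k D}

/-- `C_opt`: the optimally nested cuts. -/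
def COpt (G : SimpleGraph V) (k : ℕ) : Set (Set V) :=
  {C : Set V | ∃ α : ℤ → V, IsBiInfinitePath G α ∧ C ∈ cutsOpt G k α}

/-- The relation `C ∼ D` on optimal cuts. -/
def SimRel (G : SimpleGraph V) (k : ℕ) (C D : Set V) : Prop :=
  C = D ∨ (Cᶜ ⊂ D ∧ ∀ E ∈ COpt G k, Cᶜ ⊂ E → E ⊆ D → E = D)

/-- The equivalence class `[C]` of an optimal cut `C` under `∼`. -/
def cls (G : SimpleGraph V) (k : ℕ) (C : Set V) : Set (Set V) :=
  {D ∈ COpt G k | SimRel G k C D}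

/-- The structure tree `T(C_opt)`: vertices are the classes `[C]`, `C ∈ C_opt`, and for each
`C ∈ C_opt` there is an edge joining `[C]` and `[C*]`. -/
def structureTree (G : SimpleGraph V) (k : ℕ) :
    SimpleGraph {S : Set (Set V) // ∃ C ∈ COpt G k, S = cls G k C} where
  Adj X Y := X ≠ Y ∧ ∃ C ∈ COpt G k,
    (X.1 = cls G k C ∧ Y.1 = cls G k Cᶜ) ∨ (Y.1 = cls G k C ∧ X.1 = cls G k Cᶜ)
  symm := ⟨by
    rintro X Y ⟨hne, C, hC, h⟩
    exact ⟨hne.symm, C, hC, h.symm⟩⟩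
  loopless := ⟨fun X h => h.1 rfl⟩

/-- A locally finite graph. -/
def LocallyFiniteGraph (G : SimpleGraph V) : Prop :=
  ∀ v : V, (G.neighborSet v).Finite

/-- The `r`-th neighbourhood `N^r S` of a set of vertices. -/
def nbhd (G : SimpleGraph V) (r : ℕ) (S : Set V) : Set V :=
  {v : V | ∃ u ∈ S, G.dist v u ≤ r}

/-- The block `B[C] = ⋂_{D ∼ C} N^κ D` assigned to the vertex `[C]` of the structure tree. -/
def block (G : SimpleGraph V) (k κ : ℕ) (C : Set V) : Set V :=
  ⋂ D ∈ cls G k C, nbhd G κ D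

/-- `Aut(Γ)\Γ` is finite: the automorphism group of `Γ` acts with finitely many
vertex orbits and finitely many edge orbits. -/
def AutFinOrbits (G : SimpleGraph V) : Prop :=
  (Set.range fun v : V => Set.range fun φ : G ≃g G => φ v).Finite ∧
  (Set.range fun e : G.edgeSet => Set.range fun φ : G ≃g G => Sym2.map ⇑φ e.1).Finite

/-- A group `H` (equipped with an action on the vertices) acts on the graph `G`
by graph automorphisms. -/
def ActsOn (G : SimpleGraph V) (H : Type u) [Group H] [MulAction H V] : Prop :=
  ∀ (g : H) (u v : V), G.Adj u v ↔ G.Adj (g • u) (g • v)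

/-- `G\Γ` is finite: finitely many vertex orbits and finitely many edge orbits. -/
def ActFinOrbits (G : SimpleGraph V) (H : Type u) [Group H] [MulAction H V] : Prop :=
  (Set.range fun v : V => Set.range fun g : H => g • v).Finite ∧
  (Set.range fun e : G.edgeSet => Set.range fun g : H => Sym2.map (fun v => g • v) e.1).Finite

/-- The graph has more than one end: some finite vertex set can be removed so that at least
two infinite connected components remain. -/
def MoreThanOneEnd (G : SimpleGraph V) : Prop :=
  ∃ S : Set V, S.Finite ∧ ∃ K₁ K₂ : (G.induce Sᶜ).ConnectedComponent,
    K₁ ≠ K₂ ∧ K₁.supp.Infinite ∧ K₂.supp.Infinite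

/-- The Cayley graph of a group w.r.t. a generating set `S` (edges labelled by `S ∪ S⁻¹`). -/
def cayleyGraph (K : Type u) [Group K] (S : Set K) : SimpleGraph K where
  Adj g h := g ≠ h ∧ (g⁻¹ * h ∈ S ∨ h⁻¹ * g ∈ S)
  symm := ⟨by rintro g h ⟨hne, hs⟩; exact ⟨hne.symm, hs.symm⟩⟩
  loopless := ⟨fun g h => h.1 rfl⟩

/-- A finitely generated group all of whose Cayley graphs have at most one end. -/
def FGOneEnded (K : Type u) [Group K] : Prop :=
  Group.FG K ∧ ∀ S : Set K, S.Finite → Subgroup.closure S = ⊤ →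
    ¬ MoreThanOneEnd (cayleyGraph K S)

/-- An accessible group: it acts on a tree with finitely many orbits, finite edge
stabilizers, and all vertex stabilizers finitely generated with at most one end. -/
def GroupAccessible (K : Type u) [Group K] : Prop :=
  ∃ (T : Type u) (tr : SimpleGraph T) (φ : K →* Equiv.Perm T),
    tr.IsTree ∧
    (∀ (g : K) (u v : T), tr.Adj u v ↔ tr.Adj (φ g u) (φ g v)) ∧
    (Set.range fun t : T => Set.range fun g : K => φ g t).Finite ∧
    (Set.range fun e : tr.edgeSet => Set.range fun g : K => Sym2.map ⇑(φ g) e.1).Finite ∧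
    (∀ e ∈ tr.edgeSet, {g : K | Sym2.map ⇑(φ g) e = e}.Finite) ∧
    (∀ t : T, ∃ L : Subgroup K, (L : Set K) = {g : K | φ g t = t} ∧ FGOneEnded ↥L)

/-- A tree decomposition of `G`. -/
def IsTreeDecomp (G : SimpleGraph V) {T : Type u} (tr : SimpleGraph T) (X : T → Set V) : Prop :=
  tr.IsTree ∧ (∀ v : V, ∃ t : T, v ∈ X t) ∧
  (∀ u v : V, G.Adj u v → ∃ t : T, u ∈ X t ∧ v ∈ X t) ∧
  (∀ v : V, (tr.induce {t : T | v ∈ X t}).Connected)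

/-- `G` has treewidth at most `w`. -/
def TreewidthAtMost (G : SimpleGraph V) (w : ℕ) : Prop :=
  ∃ (T : Type u) (tr : SimpleGraph T) (X : T → Set V),
    IsTreeDecomp G tr X ∧ ∀ t : T, (X t).Finite ∧ (X t).ncard ≤ w + 1

/-- `G` has finite treewidth. -/
def FiniteTreewidth (G : SimpleGraph V) : Prop := ∃ w : ℕ, TreewidthAtMost G w

/-- Uniformly bounded vertex degrees. -/
def UnifBoundedDegree (G : SimpleGraph V) : Prop :=
  ∃ d : ℕ, ∀ v : V, (G.neighborSet v).Finite ∧ (G.neighborSet v).ncard ≤ d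

/-- A class of groups (in universe `u`), as a property of groups. -/
def VirtuallyIn (𝒢 : (K : Type u) → [inst : Group K] → Prop) (K : Type u) [Group K] : Prop :=
  ∃ L : Subgroup K, L.FiniteIndex ∧ 𝒢 ↥L

/-- `K` has a quasi-isometric section: for some monoid presentation `π : Σ* → K` with
finite alphabet there is a section `σ` of `π` with `σ(1) = ε` which is quasi-isometric
w.r.t. the tree metric on `Σ*`; `d(u,v) ≤ k` is expressed via a common prefix
decomposition `u = p u'`, `v = p v'` with `|u'| + |v'| ≤ k`. -/
def HasQIS (K : Type u) [Group K] : Prop :=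
  ∃ (A : Type u) (_ : Finite A) (π : List A → K),
    (∀ u v : List A, π (u ++ v) = π u * π v) ∧ π [] = 1 ∧ Function.Surjective π ∧
    ∃ (σ : K → List A) (k : ℕ), 1 ≤ k ∧ σ 1 = [] ∧ (∀ g : K, π (σ g) = g) ∧
      ∀ (g : K) (a : A), ∃ p u' v' : List A,
        σ g = p ++ u' ∧ σ (g * π [a]) = p ++ v' ∧ u'.length + v'.length ≤ k

/-- A context-free group: the word problem w.r.t. some surjective monoid presentation
over a finite alphabet is a context-free language. -/
def IsContextFreeGroup (K : Type u) [Group K] : Prop :=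
  ∃ (A : Type u) (_ : Finite A) (π : List A → K),
    (∀ u v : List A, π (u ++ v) = π u * π v) ∧ π [] = 1 ∧ Function.Surjective π ∧
    Language.IsContextFree ({w : List A | π w = 1} : Language A)

end CFGroups

/-!
Optimal cuts are pairwise nested: if two of them crossed, submodularity of the cut weight would
make suitable components of their corners minimal cuts for the same bi-infinite paths, while
these components are together crossed by strictly fewer `k`-cuts, contradicting optimality.
Hence distinct members of a class `[C]` have disjoint complements, and the collar `N^κ D \ D` of
every `D ∼ C` lies in the block `B[C]`. A walk between two vertices of `B[C]` can leave the block
only through such a collar and returns through the same one; replacing each excursion by a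
walk inside the connected collar yields a walk in `B[C]`. Finally, `Aut(Γ)` has finitely many
edge orbits and only finitely many `k`-cuts separate the ends of an edge, so the collars of
`k`-cuts have uniformly bounded diameter `ℓ`: a collar containing a vertex outside `N^ℓ S`
misses `S`.
-/

namespace CFGroups

variable {V : Type u} {G : SimpleGraph V}

section WalkIn

def WalkIn (G : SimpleGraph V) (S : Set V) (x y : V) : Prop :=
  ∃ p : G.Walk x y, ∀ w ∈ p.support, w ∈ S

variable {S T : Set V} {x y z : V}

lemma WalkIn.mono (h : WalkIn G S x y) (hST : S ⊆ T) : WalkIn G T x y :=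
  let ⟨p, hp⟩ := h; ⟨p, fun w hw => hST (hp w hw)⟩

lemma WalkIn.symm (h : WalkIn G S x y) : WalkIn G S y x :=
  let ⟨p, hp⟩ := h; ⟨p.reverse, fun w hw => hp w (by simpa using hw)⟩

lemma WalkIn.trans (h : WalkIn G S x y) (h' : WalkIn G S y z) : WalkIn G S x z := by
  obtain ⟨p, hp⟩ := h
  obtain ⟨q, hq⟩ := h'
  refine ⟨p.append q, fun w hw => ?_⟩
  rcases (p.mem_support_append_iff q).1 hw with hw | hw
  exacts [hp w hw, hq w hw]

lemma WalkIn.mem_left (h : WalkIn G S x y) : x ∈ S :=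
  let ⟨p, hp⟩ := h; hp x p.start_mem_support

lemma walkIn_refl (hx : x ∈ S) : WalkIn G S x x :=
  ⟨.nil, by simpa using hx⟩

lemma walkIn_of_adj (h : G.Adj x y) (hx : x ∈ S) (hy : y ∈ S) : WalkIn G S x y :=
  ⟨h.toWalk, by simp [hx, hy]⟩

lemma induce_connected_iff_walkIn :
    (G.induce S).Connected ↔ S.Nonempty ∧ ∀ x ∈ S, ∀ y ∈ S, WalkIn G S x y := by
  rw [SimpleGraph.connected_iff]
  refine ⟨fun h => ⟨Set.nonempty_coe_sort.1 h.2, fun x hx y hy => ?_⟩,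
    fun ⟨hne, h⟩ => ⟨fun ⟨x, hx⟩ ⟨y, hy⟩ => ?_, hne.to_subtype⟩⟩
  · obtain ⟨p⟩ := h.1 ⟨x, hx⟩ ⟨y, hy⟩
    refine ⟨p.map (SimpleGraph.Embedding.induce S).toHom, fun w hw => ?_⟩
    erw [SimpleGraph.Walk.support_map] at hw
    obtain ⟨w', -, rfl⟩ := List.mem_map.1 hw
    exact w'.2
  · obtain ⟨p, hp⟩ := h x hx y hy
    exact (p.induce S hp).reachable

lemma induce_connected_of_walkIn (hne : S.Nonempty) (h : ∀ x ∈ S, ∀ y ∈ S, WalkIn G S x y) :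
    (G.induce S).Connected :=
  induce_connected_iff_walkIn.2 ⟨hne, h⟩

lemma WalkIn.of_induce_connected (hS : (G.induce S).Connected) (hx : x ∈ S) (hy : y ∈ S) :
    WalkIn G S x y :=
  (induce_connected_iff_walkIn.1 hS).2 x hx y hy

end WalkIn

section Boundary

variable {A B C D X : Set V}

lemma Nested.symm (h : Nested C D) : Nested D C := by
  rcases h with h | h | h | h
  exacts [Or.inr (Or.inr (Or.inr (Set.compl_subset_compl.2 h))),
    Or.inr (Or.inl (Set.subset_compl_comm.1 h)),
    Or.inr (Or.inr (Or.inl (Set.compl_subset_comm.1 h))), Or.inl (Set.compl_subset_compl.1 h)]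

lemma nested_comm : Nested C D ↔ Nested D C :=
  ⟨Nested.symm, Nested.symm⟩

lemma nested_compl_right : Nested C Dᶜ ↔ Nested C D := by
  unfold Nested
  rw [compl_compl]
  tauto

lemma nested_compl_left : Nested Cᶜ D ↔ Nested C D := by
  rw [nested_comm, nested_compl_right, nested_comm]

lemma Nested.of_subset_of_subset_compl {K K' : Set V} (hK : K ⊆ C) (hK' : K' ⊆ Cᶜ)
    (h : Nested C D) : Nested K D ∨ Nested K' D := by
  rcases h with h | h | h | h
  exacts [Or.inl (Or.inl (hK.trans h)), Or.inl (Or.inr (Or.inl (hK.trans h))),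
    Or.inr (Or.inl (hK'.trans h)), Or.inr (Or.inr (Or.inl (hK'.trans h)))]

lemma inter_nonempty_of_not_nested (h : ¬ Nested C D) :
    (C ∩ D).Nonempty ∧ (C ∩ Dᶜ).Nonempty ∧ (Cᶜ ∩ D).Nonempty ∧ (Cᶜ ∩ Dᶜ).Nonempty := by
  simp only [Nested, not_or, Set.not_subset] at h
  obtain ⟨⟨a, ha, haD⟩, ⟨b, hb, hbD⟩, ⟨c, hc, hcD⟩, ⟨d, hd, hdD⟩⟩ := h
  exact ⟨⟨b, hb, not_not.1 hbD⟩, ⟨a, ha, haD⟩, ⟨d, hd, not_not.1 hdD⟩, ⟨c, hc, hcD⟩⟩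

lemma edgeBoundary_compl (G : SimpleGraph V) (C : Set V) :
    edgeBoundary G Cᶜ = Prod.swap '' edgeBoundary G C := by
  rw [Set.image_swap_eq_preimage_swap]
  ext ⟨a, b⟩
  simp only [edgeBoundary, Set.mem_preimage, Set.mem_ofPred_eq, Prod.fst_swap, Prod.snd_swap,
    Set.mem_compl_iff, not_not, G.adj_comm a b]
  tauto

lemma weight_compl (G : SimpleGraph V) (C : Set V) : weight G Cᶜ = weight G C := by
  rw [weight, edgeBoundary_compl, Set.ncard_image_of_injective _ Prod.swap_injective, weight]

lemma IsCut.compl (h : IsCut G C) : IsCut G Cᶜ := by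
  obtain ⟨h₁, h₂, h₃, h₄, h₅⟩ := h
  rw [IsCut, compl_compl, edgeBoundary_compl]
  exact ⟨h₂, h₁, h₄, h₃, h₅.image _⟩

lemma IsCutLe.compl {k : ℕ} (h : IsCutLe G k C) : IsCutLe G k Cᶜ :=
  ⟨h.1.compl, (weight_compl G C).trans_le h.2⟩

lemma edgeBoundary_inter_subset :
    edgeBoundary G (A ∩ B) ⊆ edgeBoundary G A ∪ edgeBoundary G B := by
  rintro ⟨a, b⟩ ⟨hab, ⟨haA, haB⟩, hb⟩
  by_cases hbA : b ∈ A
  exacts [Or.inr ⟨hab, haB, fun hbB => hb ⟨hbA, hbB⟩⟩, Or.inl ⟨hab, haA, hbA⟩]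

lemma edgeBoundary_union_subset :
    edgeBoundary G (A ∪ B) ⊆ edgeBoundary G A ∪ edgeBoundary G B := by
  rintro ⟨a, b⟩ ⟨hab, ha | ha, hb⟩
  exacts [Or.inl ⟨hab, ha, fun h => hb (Or.inl h)⟩, Or.inr ⟨hab, ha, fun h => hb (Or.inr h)⟩]

lemma edgeBoundary_inter_finite (hA : (edgeBoundary G A).Finite)
    (hB : (edgeBoundary G B).Finite) : (edgeBoundary G (A ∩ B)).Finite :=
  (hA.union hB).subset edgeBoundary_inter_subset

lemma weight_inter_add_weight_union_le (hA : (edgeBoundary G A).Finite)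
    (hB : (edgeBoundary G B).Finite) :
    weight G (A ∩ B) + weight G (A ∪ B) ≤ weight G A + weight G B := by
  have hinter : edgeBoundary G (A ∩ B) ∩ edgeBoundary G (A ∪ B) ⊆
      edgeBoundary G A ∩ edgeBoundary G B := by
    rintro ⟨a, b⟩ ⟨⟨hab, ⟨haA, haB⟩, -⟩, -, -, hb⟩
    exact ⟨⟨hab, haA, fun h => hb (Or.inl h)⟩, ⟨hab, haB, fun h => hb (Or.inr h)⟩⟩
  have hAB := hA.union hB
  have hunion := Set.ncard_le_ncard
    (Set.union_subset edgeBoundary_inter_subset edgeBoundary_union_subset) hAB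
  have hinter' := Set.ncard_le_ncard hinter (hA.subset Set.inter_subset_left)
  rw [weight, weight, weight, weight, ← Set.ncard_union_add_ncard_inter _ _ hA hB,
    ← Set.ncard_union_add_ncard_inter _ _ (hAB.subset edgeBoundary_inter_subset)
      (hAB.subset edgeBoundary_union_subset)]
  omega

lemma exists_mem_edgeBoundary_of_induce_connected {S : Set V} (hS : (G.induce S).Connected)
    {x y : V} (hx : x ∈ S) (hxX : x ∈ X) (hy : y ∈ S) (hyX : y ∉ X) :
    ∃ e ∈ edgeBoundary G X, e.1 ∈ S ∧ e.2 ∈ S := by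
  obtain ⟨p, hp⟩ := WalkIn.of_induce_connected hS hx hy
  obtain ⟨d, hd, hd₁, hd₂⟩ := p.exists_boundary_dart X hxX hyX
  exact ⟨d.toProd, ⟨d.adj, hd₁, hd₂⟩, hp _ (p.dart_fst_mem_support_of_mem_darts hd),
    hp _ (p.dart_snd_mem_support_of_mem_darts hd)⟩

end Boundary

section FiniteCuts

variable {X : Set V} {x y u v : V}

lemma induce_deleteEdges_of_notMem {Y : Set V} (hY : ∀ a ∈ Y, ∀ b ∈ Y, s(a, b) ≠ s(u, v)) :
    (G.deleteEdges {s(u, v)}).induce Y = G.induce Y := by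
  ext ⟨a, ha⟩ ⟨b, hb⟩
  simpa [SimpleGraph.deleteEdges_adj] using fun _ => hY a ha b hb

lemma IsCutLe.deleteEdges {k : ℕ} (hX : IsCutLe G (k + 1) X) (huv : G.Adj u v) (hu : u ∈ X)
    (hv : v ∉ X) : IsCutLe (G.deleteEdges {s(u, v)}) k X := by
  obtain ⟨⟨hne, hcne, hconn, hcconn, hfin⟩, hw⟩ := hX
  have hbd : edgeBoundary (G.deleteEdges {s(u, v)}) X = edgeBoundary G X \ {(u, v)} := by
    ext ⟨a, b⟩
    simp only [edgeBoundary, SimpleGraph.deleteEdges_adj, Set.mem_ofPred_eq, Set.mem_singleton_iff,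
      Sym2.eq_iff, Set.mem_sdiff, Prod.mk.injEq]
    constructor
    · rintro ⟨⟨hab, hneq⟩, ha, hb⟩
      exact ⟨⟨hab, ha, hb⟩, fun h => hneq (Or.inl h)⟩
    · rintro ⟨⟨hab, ha, hb⟩, hneq⟩
      refine ⟨⟨hab, ?_⟩, ha, hb⟩
      rintro (h | ⟨rfl, rfl⟩)
      exacts [hneq h, hv ha]
  refine ⟨⟨hne, hcne, ?_, ?_, ?_⟩, ?_⟩
  · rwa [induce_deleteEdges_of_notMem]
    intro a ha b hb h
    rcases Sym2.eq_iff.1 h with ⟨-, rfl⟩ | ⟨rfl, -⟩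
    exacts [hv hb, hv ha]
  · rwa [induce_deleteEdges_of_notMem]
    intro a ha b hb h
    rcases Sym2.eq_iff.1 h with ⟨rfl, -⟩ | ⟨-, rfl⟩
    exacts [ha hu, hb hu]
  · rw [hbd]
    exact hfin.sdiff
  · have huvX : (u, v) ∈ edgeBoundary G X := ⟨huv, hu, hv⟩
    rw [weight, hbd, Set.ncard_sdiff_singleton_of_mem huvX]
    exact Nat.sub_le_of_le_add hw

lemma setOf_isCutLe_sep_subset_of_not_reachable (k : ℕ) (hxy : ¬ G.Reachable x y) :
    {X | IsCutLe G k X ∧ x ∈ X ∧ y ∉ X} ⊆ {{z | G.Reachable x z}} := by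
  rintro X ⟨⟨⟨-, -, hconn, hcconn, -⟩, -⟩, hx, hy⟩
  refine Set.Subset.antisymm (fun z hz => ?_) fun z hz => ?_
  · obtain ⟨p, -⟩ := WalkIn.of_induce_connected hconn hx hz
    exact ⟨p⟩
  · by_contra hzX
    obtain ⟨p, -⟩ := WalkIn.of_induce_connected hcconn hzX hy
    exact hxy (hz.trans ⟨p⟩)

/-- Such a cut has a boundary edge on a fixed `x`–`y` path, and deleting that edge leaves a
`(k-1)`-cut separating its ends. -/
theorem finite_setOf_isCutLe_sep (k : ℕ) (G : SimpleGraph V) (x y : V) :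
    {X | IsCutLe G k X ∧ x ∈ X ∧ y ∉ X}.Finite := by
  induction k generalizing G x y with
  | zero =>
    by_cases hxy : G.Reachable x y
    · obtain ⟨p⟩ := hxy
      refine Set.finite_empty.subset ?_
      rintro X ⟨⟨⟨-, -, -, -, hfin⟩, hw⟩, hx, hy⟩
      obtain ⟨d, -, hd₁, hd₂⟩ := p.exists_boundary_dart X hx hy
      exact (Set.ncard_pos hfin).2 ⟨d.toProd, d.adj, hd₁, hd₂⟩ |>.ne' (Nat.le_zero.1 hw)
    · exact (Set.finite_singleton _).subset (setOf_isCutLe_sep_subset_of_not_reachable 0 hxy)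
  | succ k ih =>
    by_cases hxy : G.Reachable x y
    · obtain ⟨p⟩ := hxy
      refine (p.darts.finite_toSet.biUnion fun d _ =>
        ih (G.deleteEdges {s(d.fst, d.snd)}) d.fst d.snd).subset fun X ⟨hX, hx, hy⟩ => ?_
      obtain ⟨d, hd, hd₁, hd₂⟩ := p.exists_boundary_dart X hx hy
      exact Set.mem_biUnion hd ⟨hX.deleteEdges d.adj hd₁ hd₂, hd₁, hd₂⟩
    · exact (Set.finite_singleton _).subset (setOf_isCutLe_sep_subset_of_not_reachable _ hxy)

/-- A `k`-cut crossing `C` contains an inner vertex of `∂C` and misses another one. -/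
theorem finite_setOf_isCutLe_not_nested {C : Set V} (hC : (edgeBoundary G C).Finite) (k : ℕ) :
    {X | IsCutLe G k X ∧ ¬ Nested C X}.Finite := by
  have hF := hC.image Prod.fst
  refine (hF.biUnion fun a _ => hF.biUnion fun c _ => finite_setOf_isCutLe_sep k G a c).subset ?_
  rintro X ⟨hX, hnn⟩
  obtain ⟨⟨a, ha, haX⟩, ⟨c, hc, hcX⟩, ⟨b, hb, hbX⟩, ⟨d, hd, hdX⟩⟩ :=
    inter_nonempty_of_not_nested hnn
  obtain ⟨e, he, he₁, -⟩ :=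
    exists_mem_edgeBoundary_of_induce_connected hX.1.2.2.1 haX ha hbX hb
  obtain ⟨e', he', he'₁, -⟩ :=
    exists_mem_edgeBoundary_of_induce_connected hX.1.2.2.2.1 hcX hc hdX hd
  exact Set.mem_biUnion ⟨e, he, rfl⟩ (Set.mem_biUnion ⟨e', he', rfl⟩ ⟨hX, he₁, he'₁⟩)

end FiniteCuts

section Components

/-- The connected component of `t` in the subgraph induced by `T` (empty if `t ∉ T`). -/
def compOf (G : SimpleGraph V) (T : Set V) (t : V) : Set V := {z | WalkIn G T z t}

variable {S T : Set V} {t z a b : V}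

lemma compOf_subset : compOf G T t ⊆ T := fun _ hz => hz.mem_left

lemma mem_compOf_self (ht : t ∈ T) : t ∈ compOf G T t := walkIn_refl ht

lemma mem_compOf_of_adj (ha : a ∈ compOf G T t) (hb : b ∈ T) (hab : G.Adj a b) :
    b ∈ compOf G T t :=
  (walkIn_of_adj hab.symm hb ha.mem_left).trans ha

lemma edgeBoundary_compOf_subset : edgeBoundary G (compOf G T t) ⊆ edgeBoundary G T :=
  fun _ ⟨hab, ha, hb⟩ => ⟨hab, compOf_subset ha, fun hbT => hb (mem_compOf_of_adj ha hbT hab)⟩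

lemma compOf_connected (ht : t ∈ T) : (G.induce (compOf G T t)).Connected := by
  classical
  have hz : ∀ z ∈ compOf G T t, WalkIn G (compOf G T t) z t := by
    rintro z ⟨p, hp⟩
    refine ⟨p, fun w hw => ⟨p.dropUntil w hw, fun w' hw' => hp w' ?_⟩⟩
    exact p.support_dropUntil_subset_support hw hw'
  exact induce_connected_of_walkIn ⟨t, mem_compOf_self ht⟩
    fun x hx y hy => (hz x hx).trans (hz y hy).symm

lemma subset_compOf_of_connected (hS : (G.induce S).Connected) (hST : S ⊆ T) (ha : a ∈ S)
    (haK : a ∈ compOf G T t) : S ⊆ compOf G T t :=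
  fun _ hz => ((WalkIn.of_induce_connected hS hz ha).mono hST).trans haK

lemma compOf_subset_compl_compOf (hz : z ∉ compOf G T t) : compOf G T z ⊆ (compOf G T t)ᶜ :=
  fun _ hw hwt => hz (hw.symm.trans hwt)

/-- A connected set inside `T` either lies in a component of `T` or avoids it. -/
lemma nested_compOf_of_connected (hS : (G.induce S).Connected) (hST : S ⊆ T) :
    Nested (compOf G T t) S := by
  by_cases h : (S ∩ compOf G T t).Nonempty
  · obtain ⟨a, haS, haK⟩ := h
    exact Or.inr (Or.inr (Or.inr
      (Set.compl_subset_compl.2 (subset_compOf_of_connected hS hST haS haK))))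
  · exact Or.inr (Or.inl fun z hzK hzS => h ⟨z, hzS, hzK⟩)

/-- Every vertex outside the component reaches `Tᶜ` without entering the component. -/
lemma compOf_compl_connected (hc : G.Connected) (hTc : (G.induce Tᶜ).Connected) :
    (G.induce (compOf G T t)ᶜ).Connected := by
  have hTK : Tᶜ ⊆ (compOf G T t)ᶜ := fun z hz hzK => hz (compOf_subset hzK)
  obtain ⟨⟨y, hy⟩, hTc⟩ := induce_connected_iff_walkIn.1 hTc
  have key : ∀ z ∈ (compOf G T t)ᶜ, WalkIn G (compOf G T t)ᶜ z y := by
    intro z hz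
    by_cases hzT : z ∈ T
    · obtain ⟨p⟩ := hc.preconnected z y
      obtain ⟨d, -, hd₁, hd₂⟩ :=
        p.exists_boundary_dart (compOf G T z) (mem_compOf_self hzT) fun h => hy (compOf_subset h)
      have hsub := compOf_subset_compl_compOf (t := t) hz
      have hd₂T : d.snd ∉ T := fun h => hd₂ (mem_compOf_of_adj hd₁ h d.adj)
      have hzd := WalkIn.of_induce_connected (compOf_connected hzT) (mem_compOf_self hzT) hd₁
      exact ((hzd.mono hsub).trans (walkIn_of_adj d.adj (hsub hd₁) (hTK hd₂T))).trans
        ((hTc _ hd₂T y hy).mono hTK)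
    · exact (hTc z hzT y hy).mono hTK
  exact induce_connected_of_walkIn ⟨y, hTK hy⟩ fun x hx z hz => (key x hx).trans (key z hz).symm

lemma isCut_compOf (hc : G.Connected) (ht : t ∈ T) (hTc : (G.induce Tᶜ).Connected)
    (hT : (edgeBoundary G T).Finite) : IsCut G (compOf G T t) := by
  obtain ⟨y, hy⟩ := Set.nonempty_coe_sort.1 hTc.nonempty
  exact ⟨⟨t, mem_compOf_self ht⟩, ⟨y, fun h => hy (compOf_subset h)⟩, compOf_connected ht,
    compOf_compl_connected hc hTc, hT.subset edgeBoundary_compOf_subset⟩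

lemma isCut_compOf_inter (hc : G.Connected) {A B : Set V} (hA : IsCut G A) (hB : IsCut G B)
    (hAB : (Aᶜ ∩ Bᶜ).Nonempty) (ht : t ∈ A ∩ B) : IsCut G (compOf G (A ∩ B) t) := by
  refine isCut_compOf hc ht ?_ (edgeBoundary_inter_finite hA.2.2.2.2 hB.2.2.2.2)
  rw [Set.compl_inter]
  exact SimpleGraph.induce_union_connected hA.2.2.2.1.preconnected hB.2.2.2.1.preconnected hAB

lemma nested_compOf_inter {A B X : Set V} (hX : (G.induce X).Connected)
    (hXc : (G.induce Xᶜ).Connected) (hA : Nested A X) (hB : Nested B X)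
    (hAB : (Aᶜ ∩ Bᶜ).Nonempty) : Nested (compOf G (A ∩ B) t) X := by
  have hK : ∀ Y, compOf G (A ∩ B) t ⊆ Y → Y ⊆ X ∨ Y ⊆ Xᶜ → Nested (compOf G (A ∩ B) t) X :=
    fun Y hKY hY => hY.elim (fun h => Or.inl (hKY.trans h)) fun h => Or.inr (Or.inl (hKY.trans h))
  have hKA := hK A (compOf_subset.trans Set.inter_subset_left)
  have hKB := hK B (compOf_subset.trans Set.inter_subset_right)
  obtain ⟨z, hzA, hzB⟩ := hAB
  rcases hA with hA | hA | hA | hA <;> try first | exact hKA (.inl hA) | exact hKA (.inr hA)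
  all_goals
    rcases hB with hB | hB | hB | hB <;> try first | exact hKB (.inl hB) | exact hKB (.inr hB)
  · exact nested_compl_right.1 (nested_compOf_of_connected hXc
      (Set.subset_inter (Set.compl_subset_comm.1 hA) (Set.compl_subset_comm.1 hB)))
  · exact absurd (hA hzA) (hB hzB)
  · exact absurd (hB hzB) (hA hzA)
  · exact nested_compOf_of_connected hX
      (Set.subset_inter (Set.compl_subset_compl.1 hA) (Set.compl_subset_compl.1 hB))

end Components

section Tails

variable {T : Set V}

/-- A ray can leave `T` only at the finitely many inner vertices of `∂T`, so from some point on
it stays in a single component of `T`. -/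
lemma IsRayPath.exists_infinite_inter_compOf {γ : ℕ → V} (hγ : IsRayPath G γ)
    (hT : (edgeBoundary G T).Finite) (hinf : (Set.range γ ∩ T).Infinite) :
    ∃ t ∈ T, (Set.range γ ∩ compOf G T t).Infinite := by
  obtain ⟨M, hM⟩ := ((hT.image Prod.fst).preimage hγ.1.injOn).bddAbove
  rw [← Set.image_preimage_eq_range_inter] at hinf
  obtain ⟨n, hnT, hMn⟩ := (Set.Infinite.of_image γ hinf).exists_gt M
  have hstay : ∀ m, n ≤ m → γ m ∈ compOf G T (γ n) := by
    intro m hm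
    induction m, hm using Nat.le_induction with
    | base => exact mem_compOf_self hnT
    | succ m hnm ih =>
      refine mem_compOf_of_adj ih (by_contra fun h => ?_) (hγ.2 m)
      have := hM ⟨(γ m, γ (m + 1)), ⟨hγ.2 m, compOf_subset ih, h⟩, rfl⟩
      omega
  refine ⟨γ n, hnT, ((Set.Ici_infinite n).image hγ.1.injOn).mono ?_⟩
  rintro _ ⟨m, hm, rfl⟩
  exact ⟨⟨m, rfl⟩, hstay m hm⟩

lemma IsBiInfinitePath.exists_infinite_inter_compOf {α : ℤ → V} (hα : IsBiInfinitePath G α)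
    (hT : (edgeBoundary G T).Finite) (hinf : (Set.range α ∩ T).Infinite) :
    ∃ t ∈ T, (Set.range α ∩ compOf G T t).Infinite := by
  have hfwd : IsRayPath G fun n : ℕ => α n :=
    ⟨hα.1.comp Nat.cast_injective, fun n => by simpa using hα.2 n⟩
  have hbwd : IsRayPath G fun n : ℕ => α (-n) :=
    ⟨hα.1.comp (neg_injective.comp Nat.cast_injective),
      fun n => by convert (hα.2 (-((n + 1 : ℕ) : ℤ))).symm using 2; push_cast; ring⟩
  have hrange : Set.range α = (Set.range fun n : ℕ => α n) ∪ Set.range fun n : ℕ => α (-n) := by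
    refine Set.Subset.antisymm ?_ (Set.union_subset ?_ ?_)
    · rintro _ ⟨i, rfl⟩
      obtain ⟨n, rfl | rfl⟩ := Int.eq_nat_or_neg i
      exacts [Or.inl ⟨n, rfl⟩, Or.inr ⟨n, rfl⟩]
    all_goals exact Set.range_comp_subset_range _ α
  rw [hrange, Set.union_inter_distrib_right, Set.infinite_union] at hinf
  rcases hinf with hinf | hinf
  · obtain ⟨t, ht, h⟩ := hfwd.exists_infinite_inter_compOf hT hinf
    exact ⟨t, ht, h.mono (Set.inter_subset_inter_left _ (Set.range_comp_subset_range _ α))⟩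
  · obtain ⟨t, ht, h⟩ := hbwd.exists_infinite_inter_compOf hT hinf
    exact ⟨t, ht, h.mono (Set.inter_subset_inter_left _ (Set.range_comp_subset_range _ α))⟩

end Tails

section Nestedness

variable {k : ℕ} {α β : ℤ → V} {A B C D E : Set V}

lemma mdeg_compl (k : ℕ) (C : Set V) : mdeg G k Cᶜ = mdeg G k C := by
  simp only [mdeg, nested_compl_left]

lemma cutsOpt_compl (h : C ∈ cutsOpt G k α) : Cᶜ ∈ cutsOpt G k α := by
  obtain ⟨⟨⟨hC, hin, hout⟩, hmin⟩, hopt⟩ := h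
  refine ⟨⟨⟨hC.compl, hout, by rwa [compl_compl]⟩, fun Y hY => ?_⟩, fun Y hY => ?_⟩
  · rw [weight_compl]
    exact hmin Y hY
  · rw [mdeg_compl]
    exact hopt Y hY

lemma IsCutLe.of_mem_cutsMin (hacc : AccessibleWith G k) (hα : IsBiInfinitePath G α)
    (hC : C ∈ cutsMin G α) : IsCutLe G k C :=
  let ⟨_, hC₀, hw⟩ := hacc α hα ⟨C, hC.1⟩
  ⟨hC.1.1, (hC.2 _ hC₀).trans hw⟩

lemma IsCutLe.of_mem_cOpt (hacc : AccessibleWith G k) (hC : C ∈ COpt G k) : IsCutLe G k C :=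
  let ⟨_, hα, hC⟩ := hC
  .of_mem_cutsMin hacc hα hC.1

lemma mdeg_le_of_mem_cutsOpt (hC : C ∈ cutsOpt G k α) (hD : D ∈ cutsSplitting G α)
    (hw : weight G D ≤ weight G C) : mdeg G k C ≤ mdeg G k D :=
  hC.2 D ⟨hD, fun Y hY => hw.trans (hC.1.2 Y hY)⟩

lemma weight_compl_inter_compl (G : SimpleGraph V) (A B : Set V) :
    weight G (Aᶜ ∩ Bᶜ) = weight G (A ∪ B) := by
  rw [← Set.compl_union, weight_compl]

lemma infinite_inter_or_infinite_inter_compl {R P : Set V} (Q : Set V) (h : (R ∩ P).Infinite) :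
    (R ∩ (P ∩ Q)).Infinite ∨ (R ∩ (P ∩ Qᶜ)).Infinite := by
  rw [← Set.infinite_union, ← Set.inter_union_distrib_left, ← Set.inter_union_distrib_left,
    Set.union_compl_self, Set.inter_univ]
  exact h

/-- A component of the corner `A ∩ B` splitting `α` is a competitor of `A` in `C_min(α)`. -/
lemma exists_compOf_inter_of_mem_cutsOpt (hc : G.Connected) (hα : IsBiInfinitePath G α)
    (hA : A ∈ cutsOpt G k α) (hB : IsCut G B) (hAB : (Aᶜ ∩ Bᶜ).Nonempty)
    (hin : (Set.range α ∩ (A ∩ B)).Infinite) :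
    ∃ t ∈ A ∩ B, weight G A ≤ weight G (A ∩ B) ∧
      (weight G (A ∩ B) ≤ weight G A → mdeg G k A ≤ mdeg G k (compOf G (A ∩ B) t)) := by
  have hbd := edgeBoundary_inter_finite hA.1.1.1.2.2.2.2 hB.2.2.2.2
  obtain ⟨t, ht, htinf⟩ := hα.exists_infinite_inter_compOf hbd hin
  have hout : Aᶜ ⊆ (compOf G (A ∩ B) t)ᶜ :=
    Set.compl_subset_compl.2 (compOf_subset.trans Set.inter_subset_left)
  have hK : compOf G (A ∩ B) t ∈ cutsSplitting G α :=
    ⟨isCut_compOf_inter hc hA.1.1.1 hB hAB ht, htinf,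
      hA.1.1.2.2.mono (Set.inter_subset_inter_right _ hout)⟩
  have hKw : weight G (compOf G (A ∩ B) t) ≤ weight G (A ∩ B) :=
    Set.ncard_le_ncard edgeBoundary_compOf_subset hbd
  exact ⟨t, ht, (hA.1.2 _ hK).trans hKw, fun hw => mdeg_le_of_mem_cutsOpt hA hK (hKw.trans hw)⟩

lemma ncard_add_ncard_add_two_le {ι : Type*} {s t s' t' : Set ι} {a b : ι} (hs : s.Finite)
    (ht : t.Finite) (hab : a ≠ b) (ha : a ∈ s ∪ t) (hb : b ∈ s ∪ t)
    (hunion : s' ∪ t' ⊆ (s ∪ t) \ {a, b}) (hinter : s' ∩ t' ⊆ s ∩ t) :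
    s'.ncard + t'.ncard + 2 ≤ s.ncard + t.ncard := by
  have hst := hs.union ht
  have hs' := (hst.sdiff (t := {a, b})).subset (Set.subset_union_left.trans hunion)
  have ht' := (hst.sdiff (t := {a, b})).subset (Set.subset_union_right.trans hunion)
  have h₁ := Set.ncard_le_ncard hunion hst.sdiff
  have h₂ := Set.ncard_le_ncard hinter (hs.subset Set.inter_subset_left)
  rw [Set.ncard_sdiff (Set.insert_subset ha (Set.singleton_subset_iff.2 hb)),
    Set.ncard_pair hab] at h₁
  have h₃ := Set.ncard_le_ncard (Set.insert_subset ha (Set.singleton_subset_iff.2 hb)) hst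
  rw [Set.ncard_pair hab] at h₃
  rw [← Set.ncard_union_add_ncard_inter _ _ hs' ht', ← Set.ncard_union_add_ncard_inter _ _ hs ht]
  omega

/-- Every `k`-cut crossing one of the two corner components crosses `A` or `B`, one crossing
both components crosses both `A` and `B`, and `A`, `B` cross each other but neither component. -/
lemma mdeg_compOf_add_mdeg_compOf_add_two_le (hA : IsCutLe G k A)
    (hB : IsCutLe G k B) (hnn : ¬ Nested A B) {t t' : V} (ht : t ∈ A ∩ B)
    (ht' : t' ∈ Aᶜ ∩ Bᶜ) :
    mdeg G k (compOf G (A ∩ B) t) + mdeg G k (compOf G (Aᶜ ∩ Bᶜ) t') + 2 ≤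
      mdeg G k A + mdeg G k B := by
  set K := compOf G (A ∩ B) t
  set K' := compOf G (Aᶜ ∩ Bᶜ) t'
  have hKA : K ⊆ A := compOf_subset.trans Set.inter_subset_left
  have hKB : K ⊆ B := compOf_subset.trans Set.inter_subset_right
  have hK'A : K' ⊆ Aᶜ := compOf_subset.trans Set.inter_subset_left
  have hK'B : K' ⊆ Bᶜ := compOf_subset.trans Set.inter_subset_right
  have hnested : ∀ X, IsCut G X → Nested A X → Nested B X → Nested K X ∧ Nested K' X :=
    fun X hX hAX hBX =>
      ⟨nested_compOf_inter hX.2.2.1 hX.2.2.2.1 hAX hBX ⟨t', ht'⟩,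
        nested_compOf_inter hX.2.2.1 hX.2.2.2.1 (nested_compl_left.2 hAX)
          (nested_compl_left.2 hBX) (by rw [compl_compl, compl_compl]; exact ⟨t, ht⟩)⟩
  refine ncard_add_ncard_add_two_le (finite_setOf_isCutLe_not_nested hA.1.2.2.2.2 k)
    (finite_setOf_isCutLe_not_nested hB.1.2.2.2.2 k) (fun h : A = B => hnn (h ▸ Or.inl subset_rfl))
    (Or.inr ⟨hA, fun h => hnn h.symm⟩) (Or.inl ⟨hB, hnn⟩) ?_ ?_
  · rintro X hX
    have hXk : IsCutLe G k X := hX.elim And.left And.left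
    have hX' : ¬ Nested K X ∨ ¬ Nested K' X := hX.imp And.right And.right
    refine ⟨?_, ?_⟩
    · by_contra hXAB
      simp only [Set.mem_union, Set.mem_ofPred_eq, not_or, not_and, not_not] at hXAB
      obtain ⟨hKX, hK'X⟩ := hnested X hXk.1 (hXAB.1 hXk) (hXAB.2 hXk)
      exact hX'.elim (· hKX) (· hK'X)
    · rintro (rfl | rfl)
      · exact hX'.elim (· (Or.inl hKA)) (· (Or.inr (Or.inl hK'A)))
      · exact hX'.elim (· (Or.inl hKB)) (· (Or.inr (Or.inl hK'B)))
  · rintro X ⟨⟨hXk, hKX⟩, -, hK'X⟩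
    have hcross : ∀ {Y : Set V}, K ⊆ Y → K' ⊆ Yᶜ → ¬ Nested Y X := fun hKY hK'Y hYX =>
      (Nested.of_subset_of_subset_compl hKY hK'Y hYX).elim hKX hK'X
    exact ⟨⟨hXk, hcross hKA hK'A⟩, ⟨hXk, hcross hKB hK'B⟩⟩

lemma false_of_crossing_of_opposite_corners (hc : G.Connected) (hacc : AccessibleWith G k)
    (hα : IsBiInfinitePath G α) (hβ : IsBiInfinitePath G β) (hA : A ∈ cutsOpt G k α)
    (hB : B ∈ cutsOpt G k β) (hnn : ¬ Nested A B) (hαAB : (Set.range α ∩ (A ∩ B)).Infinite)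
    (hβAB : (Set.range β ∩ (Aᶜ ∩ Bᶜ)).Infinite) : False := by
  obtain ⟨t, ht, hwA, hmA⟩ := exists_compOf_inter_of_mem_cutsOpt hc hα hA hB.1.1.1
    (hβAB.nonempty.mono Set.inter_subset_right) hαAB
  obtain ⟨t', ht', hwB, hmB⟩ := exists_compOf_inter_of_mem_cutsOpt hc hβ (cutsOpt_compl hB)
    hA.1.1.1.compl (by rw [compl_compl, compl_compl]; exact ⟨t, ht.2, ht.1⟩)
    (by rwa [Set.inter_comm Bᶜ])
  rw [Set.inter_comm Bᶜ Aᶜ] at ht' hwB hmB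
  rw [weight_compl_inter_compl, weight_compl] at hwB hmB
  rw [mdeg_compl] at hmB
  have hsub := weight_inter_add_weight_union_le hA.1.1.1.2.2.2.2 hB.1.1.1.2.2.2.2
  have hcount := mdeg_compOf_add_mdeg_compOf_add_two_le (.of_mem_cutsMin hacc hα hA.1)
    (.of_mem_cutsMin hacc hβ hB.1) hnn ht ht'
  have := hmA (by omega)
  have := hmB (by omega)
  omega

lemma false_of_crossing_of_diagonal_corners (hc : G.Connected) (hacc : AccessibleWith G k)
    (hα : IsBiInfinitePath G α) (hβ : IsBiInfinitePath G β) (hA : A ∈ cutsOpt G k α)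
    (hB : B ∈ cutsOpt G k β) (hnn : ¬ Nested A B) (hα₁ : (Set.range α ∩ (A ∩ B)).Infinite)
    (hα₂ : (Set.range α ∩ (Aᶜ ∩ Bᶜ)).Infinite) (hβ₁ : (Set.range β ∩ (Bᶜ ∩ A)).Infinite)
    (hβ₂ : (Set.range β ∩ (B ∩ Aᶜ)).Infinite) : False := by
  have hAcut := hA.1.1.1
  have hBcut := hB.1.1.1
  obtain ⟨t₁, ht₁, hw₁, hm₁⟩ := exists_compOf_inter_of_mem_cutsOpt hc hα hA hBcut
    (hα₂.nonempty.mono Set.inter_subset_right) hα₁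
  obtain ⟨t₂, ht₂, hw₂, hm₂⟩ := exists_compOf_inter_of_mem_cutsOpt hc hα (cutsOpt_compl hA)
    hBcut.compl (by rw [compl_compl, compl_compl]; exact hα₁.nonempty.mono Set.inter_subset_right)
    hα₂
  obtain ⟨t₃, ht₃, hw₃, hm₃⟩ := exists_compOf_inter_of_mem_cutsOpt hc hβ (cutsOpt_compl hB)
    hAcut (by rw [compl_compl]; exact hβ₂.nonempty.mono Set.inter_subset_right) hβ₁
  obtain ⟨t₄, ht₄, hw₄, hm₄⟩ := exists_compOf_inter_of_mem_cutsOpt hc hβ hB hAcut.compl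
    (by rw [compl_compl]; exact hβ₁.nonempty.mono Set.inter_subset_right) hβ₂
  have hsub₁ := weight_inter_add_weight_union_le hAcut.2.2.2.2 hBcut.2.2.2.2
  have hsub₂ := weight_inter_add_weight_union_le hBcut.compl.2.2.2.2 hAcut.2.2.2.2
  have hBA : weight G (B ∩ Aᶜ) = weight G (Bᶜ ∪ A) := by
    rw [← weight_compl_inter_compl, compl_compl]
  rw [weight_compl_inter_compl] at hw₂ hm₂
  rw [weight_compl] at hw₂ hw₃ hm₂ hm₃ hsub₂
  rw [mdeg_compl] at hm₂ hm₃
  have hAk := IsCutLe.of_mem_cutsMin hacc hα hA.1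
  have hBk := IsCutLe.of_mem_cutsMin hacc hβ hB.1
  have hcount₁ := mdeg_compOf_add_mdeg_compOf_add_two_le hAk hBk hnn ht₁ ht₂
  have hcount₂ := mdeg_compOf_add_mdeg_compOf_add_two_le hBk.compl hAk
    (fun h => hnn (nested_compl_left.1 h).symm) ht₃ (by rwa [compl_compl])
  rw [compl_compl, mdeg_compl] at hcount₂
  have := hm₁ (by omega)
  have := hm₂ (by omega)
  have := hm₃ (by omega)
  have := hm₄ (by omega)
  omega

/-- If two optimal cuts `D ∈ C_opt(α)`, `E ∈ C_opt(β)` crossed, then, up to replacing `D` or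
`E` by its complement, either `α` and `β` have infinite parts in opposite corners, or `α`
lies in both corners of one diagonal and `β` in both corners of the other. -/
lemma false_of_crossing (hc : G.Connected) (hacc : AccessibleWith G k)
    (hα : IsBiInfinitePath G α) (hβ : IsBiInfinitePath G β) (hD : D ∈ cutsOpt G k α)
    (hE : E ∈ cutsOpt G k β) (hnn : ¬ Nested D E) (hαDE : (Set.range α ∩ (D ∩ E)).Infinite) :
    False := by
  have hDc := cutsOpt_compl hD
  have hnn' : ¬ Nested Dᶜ E := fun h => hnn (nested_compl_left.1 h)
  rcases infinite_inter_or_infinite_inter_compl D hE.1.1.2.2 with hβ₁ | hβ₁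
  swap
  · exact false_of_crossing_of_opposite_corners hc hacc hα hβ hD hE hnn hαDE
      (by rwa [Set.inter_comm Dᶜ])
  rcases infinite_inter_or_infinite_inter_compl E hD.1.1.2.2 with hα₂ | hα₂
  · exact false_of_crossing_of_opposite_corners hc hacc hα hβ hDc hE hnn' hα₂
      (by rwa [compl_compl, Set.inter_comm D])
  rcases infinite_inter_or_infinite_inter_compl D hE.1.1.2.1 with hβ₂ | hβ₂
  · exact false_of_crossing_of_opposite_corners hc hacc hα hβ hDc (cutsOpt_compl hE)
      (fun h => hnn' (nested_compl_right.1 h)) hα₂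
      (by rwa [compl_compl, compl_compl, Set.inter_comm D])
  · exact false_of_crossing_of_diagonal_corners hc hacc hα hβ hD hE hnn hαDE hα₂ hβ₁ hβ₂

theorem nested_of_mem_cOpt (hc : G.Connected) (hacc : AccessibleWith G k) (hD : D ∈ COpt G k)
    (hE : E ∈ COpt G k) : Nested D E := by
  obtain ⟨α, hα, hD⟩ := hD
  obtain ⟨β, hβ, hE⟩ := hE
  by_contra hnn
  rcases infinite_inter_or_infinite_inter_compl E hD.1.1.2.1 with h | h
  · exact false_of_crossing hc hacc hα hβ hD hE hnn h
  · exact false_of_crossing hc hacc hα hβ hD (cutsOpt_compl hE)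
      (fun h' => hnn (nested_compl_right.1 h')) h

end Nestedness

section Blocks

def collar (G : SimpleGraph V) (κ : ℕ) (D : Set V) : Set V := nbhd G κ D ∩ Dᶜ

variable {k κ ℓ : ℕ} {C D : Set V}

lemma subset_nbhd (r : ℕ) (S : Set V) : S ⊆ nbhd G r S :=
  fun v hv => ⟨v, hv, by simp⟩

lemma mem_nbhd_of_adj {r : ℕ} {S : Set V} {x y : V} (hr : 1 ≤ r) (hxy : G.Adj x y) (hy : y ∈ S) :
    x ∈ nbhd G r S :=
  ⟨y, hy, (SimpleGraph.dist_eq_one_iff_adj.2 hxy).le.trans hr⟩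

lemma ssubset_of_mem_cls (hD : D ∈ cls G k C) (hDC : D ≠ C) : Cᶜ ⊂ D :=
  (hD.2.resolve_left (Ne.symm hDC)).1

lemma pairwise_disjoint_compl_cls (hc : G.Connected) (hacc : AccessibleWith G k)
    (hC : C ∈ COpt G k) : (cls G k C).Pairwise fun D E => Disjoint Dᶜ Eᶜ := by
  intro D hD E hE hDE
  by_cases hDC : D = C
  · subst hDC
    exact Set.disjoint_compl_right_iff_subset.2 (ssubset_of_mem_cls hE (Ne.symm hDE)).1
  by_cases hEC : E = C
  · subst hEC
    exact Set.disjoint_compl_left_iff_subset.2 (ssubset_of_mem_cls hD hDE).1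
  have hCD := ssubset_of_mem_cls hD hDC
  have hCE := ssubset_of_mem_cls hE hEC
  have hmin : ∀ {X Y}, X ∈ cls G k C → Y ∈ cls G k C → Y ≠ C → Cᶜ ⊂ X → X ⊆ Y → X = Y :=
    fun hX hY hYC hCX hXY => (hY.2.resolve_left (Ne.symm hYC)).2 _ hX.1 hCX hXY
  rcases nested_of_mem_cOpt hc hacc hD.1 hE.1 with h | h | h | h
  · exact absurd (hmin hD hE hEC hCD h) hDE
  · obtain ⟨x, hx⟩ := (IsCutLe.of_mem_cOpt hacc hC).1.2.1
    exact absurd (hCE.1 hx) (h (hCD.1 hx))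
  · exact Set.disjoint_compl_left_iff_subset.2 (Set.compl_subset_comm.1 h)
  · exact absurd (hmin hE hD hDC hCE (Set.compl_subset_compl.1 h)).symm hDE

lemma collar_subset_iInter_nbhd {𝒟 : Set (Set V)}
    (hdisj : 𝒟.Pairwise fun D E => Disjoint Dᶜ Eᶜ) (hD : D ∈ 𝒟) :
    collar G κ D ⊆ ⋂ E ∈ 𝒟, nbhd G κ E := by
  rintro z ⟨hzN, hzD⟩
  refine Set.mem_iInter₂.2 fun E hE => ?_
  by_cases hDE : D = E
  · exact hDE ▸ hzN
  · exact subset_nbhd κ E (by_contra fun hzE => Set.disjoint_left.1 (hdisj hD hE hDE) hzD hzE)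

lemma collar_subset_iInter_nbhd_sdiff {𝒟 : Set (Set V)}
    (hdisj : 𝒟.Pairwise fun D E => Disjoint Dᶜ Eᶜ)
    (hdiam : ∀ D ∈ 𝒟, ∀ x ∈ collar G κ D, ∀ y ∈ collar G κ D, G.dist x y ≤ ℓ) {S : Set V}
    {x : V} (hD : D ∈ 𝒟) (hx : x ∈ collar G κ D) (hxS : x ∉ nbhd G ℓ S) :
    collar G κ D ⊆ (⋂ E ∈ 𝒟, nbhd G κ E) \ S :=
  fun y hy => ⟨collar_subset_iInter_nbhd hdisj hD hy, fun hyS => hxS ⟨y, hyS, hdiam D hD x hx y hy⟩⟩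

/-- A walk between two points of `B = ⋂_{D ∈ 𝒟} N^κ D` can only leave `B` through
the collar of some `D ∈ 𝒟`, and must come back through the same collar; each such excursion is
replaced by a walk inside that collar, which lies in `B` and, having diameter at most `ℓ`,
misses `S` as soon as one of its points lies outside `N^ℓ S`. -/
lemma walkIn_iInter_nbhd_diff {𝒟 : Set (Set V)} (hκ : 1 ≤ κ)
    (hdisj : 𝒟.Pairwise fun D E => Disjoint Dᶜ Eᶜ)
    (hconn : ∀ D ∈ 𝒟, (G.induce (collar G κ D)).Connected)
    (hdiam : ∀ D ∈ 𝒟, ∀ x ∈ collar G κ D, ∀ y ∈ collar G κ D, G.dist x y ≤ ℓ)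
    {S : Set V} {u v : V} (p : G.Walk u v) (hp : ∀ w ∈ p.support, w ∉ nbhd G ℓ S)
    (hu : u ∈ ⋂ D ∈ 𝒟, nbhd G κ D) (hv : v ∈ ⋂ D ∈ 𝒟, nbhd G κ D) :
    WalkIn G ((⋂ D ∈ 𝒟, nbhd G κ D) \ S) u v := by
  set B := ⋂ D ∈ 𝒟, nbhd G κ D
  suffices h : ∀ x y (q : G.Walk x y), y ∈ B → (∀ w ∈ q.support, w ∉ nbhd G ℓ S) →
      (x ∈ B → WalkIn G (B \ S) x y) ∧ ∀ D ∈ 𝒟, x ∈ Dᶜ → collar G κ D ⊆ B \ S →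
        ∀ z ∈ collar G κ D, WalkIn G (B \ S) z y from (h u v p hv hp).1 hu
  intro x y q
  induction q with
  | @nil y =>
    intro hy hq
    have hy' : y ∈ B \ S := ⟨hy, fun h => hq y (by simp) (subset_nbhd ℓ S h)⟩
    refine ⟨fun _ => walkIn_refl hy', fun D hD hyD hsub z hz => ?_⟩
    exact (WalkIn.of_induce_connected (hconn D hD) hz ⟨Set.mem_iInter₂.1 hy D hD, hyD⟩).mono hsub
  | @cons x w y hxw q ih =>
    intro hy hq
    obtain ⟨ihB, ihD⟩ := ih hy fun w' hw' => hq w' (by simp [hw'])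
    have hxS : x ∉ nbhd G ℓ S := hq x (by simp)
    have hB : x ∈ B → WalkIn G (B \ S) x y := by
      intro hxB
      by_cases hwB : w ∈ B
      · have hwS : w ∉ S := fun h => hq w (by simp) (subset_nbhd ℓ S h)
        have hxS' : x ∉ S := fun h => hxS (subset_nbhd ℓ S h)
        exact (walkIn_of_adj (S := B \ S) hxw ⟨hxB, hxS'⟩ ⟨hwB, hwS⟩).trans (ihB hwB)
      · obtain ⟨D, hD, hwD⟩ : ∃ D ∈ 𝒟, w ∉ nbhd G κ D := by
          simpa [B, Set.mem_iInter₂] using hwB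
        have hxD : x ∈ collar G κ D :=
          ⟨Set.mem_iInter₂.1 hxB D hD, fun h => hwD (mem_nbhd_of_adj hκ hxw.symm h)⟩
        exact ihD D hD (fun h => hwD (subset_nbhd κ D h))
          (collar_subset_iInter_nbhd_sdiff hdisj hdiam hD hxD hxS) x hxD
    refine ⟨hB, fun D hD hxD hsub z hz => ?_⟩
    by_cases hxN : x ∈ nbhd G κ D
    · exact ((WalkIn.of_induce_connected (hconn D hD) hz ⟨hxN, hxD⟩).mono hsub).trans
        (hB (collar_subset_iInter_nbhd hdisj hD ⟨hxN, hxD⟩))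
    · exact ihD D hD (fun hwD => hxN (mem_nbhd_of_adj hκ hxw hwD)) hsub z hz

end Blocks

section Automorphisms

variable {W : Type*} {H : SimpleGraph W} {k : ℕ}

lemma dist_le_dist_iso (φ : G ≃g H) (x y : V) : H.dist (φ x) (φ y) ≤ G.dist x y := by
  by_cases h : G.Reachable x y
  · obtain ⟨p, hp⟩ := h.exists_walk_length_eq_dist
    exact (H.dist_le (p.map φ.toHom)).trans_eq (by rw [SimpleGraph.Walk.length_map, hp])
  · rw [SimpleGraph.dist_eq_zero_of_not_reachable fun h' => h (by simpa using h'.map φ.symm.toHom)]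
    exact Nat.zero_le _

lemma dist_iso (φ : G ≃g H) (x y : V) : H.dist (φ x) (φ y) = G.dist x y :=
  (dist_le_dist_iso φ x y).antisymm (by simpa using dist_le_dist_iso φ.symm (φ x) (φ y))

lemma preimage_nbhd_iso (φ : G ≃g H) (r : ℕ) (S : Set W) :
    φ ⁻¹' nbhd H r S = nbhd G r (φ ⁻¹' S) := by
  ext v
  constructor
  · rintro ⟨w, hw, hd⟩
    exact ⟨φ.symm w, by simpa using hw, by rwa [← dist_iso φ, φ.apply_symm_apply]⟩
  · rintro ⟨w, hw, hd⟩
    exact ⟨φ w, hw, by rwa [dist_iso φ]⟩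

lemma preimage_collar_iso (φ : G ≃g H) (κ : ℕ) (S : Set W) :
    φ ⁻¹' collar H κ S = collar G κ (φ ⁻¹' S) := by
  rw [collar, collar, Set.preimage_inter, Set.preimage_compl, preimage_nbhd_iso]

lemma IsCutLe.preimage_iso (φ : G ≃g H) {X : Set W} (hX : IsCutLe H k X) :
    IsCutLe G k (φ ⁻¹' X) := by
  obtain ⟨⟨hne, hcne, hconn, hcconn, hfin⟩, hw⟩ := hX
  have hbd : edgeBoundary G (φ ⁻¹' X) = Prod.map φ φ ⁻¹' edgeBoundary H X := by
    ext ⟨a, b⟩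
    simp [edgeBoundary, φ.map_adj_iff]
  have hinj : Function.Injective (Prod.map φ φ) := φ.injective.prodMap φ.injective
  refine ⟨⟨hne.preimage φ.surjective, hcne.preimage φ.surjective,
    (φ.induce φ.bijective.bijOn_preimage).connected_iff.2 hconn,
    (φ.induce φ.bijective.bijOn_preimage).connected_iff.2 hcconn, ?_⟩, ?_⟩
  · rw [hbd]
    exact hfin.preimage hinj.injOn
  · rw [weight, hbd, Set.ncard_preimage_of_injective_subset_range hinj
      (by simp [(φ.surjective.prodMap φ.surjective).range_eq])]
    exact hw

lemma exists_finite_edge_transversal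
    (h : (Set.range fun e : G.edgeSet => Set.range fun φ : G ≃g G => Sym2.map φ e.1).Finite) :
    ∃ E₀ : Set (Sym2 V), E₀.Finite ∧
      ∀ e ∈ G.edgeSet, ∃ e₀ ∈ E₀, ∃ φ : G ≃g G, Sym2.map φ e₀ = e := by
  set O : G.edgeSet → Set (Sym2 V) := fun e => Set.range fun φ : G ≃g G => Sym2.map φ e.1
  have : Finite (Set.range O) := h.to_subtype
  choose rep hrep using fun o : Set.range O => o.2
  refine ⟨Set.range fun o => (rep o).1, Set.finite_range _, fun e he => ?_⟩
  have hmem : e ∈ O (rep ⟨O ⟨e, he⟩, Set.mem_range_self _⟩) := by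
    rw [hrep]
    exact ⟨.refl, by simp⟩
  obtain ⟨φ, hφ⟩ := hmem
  exact ⟨_, Set.mem_range_self _, φ, hφ⟩

lemma finite_setOf_dist_le (hc : G.Connected) (hlf : LocallyFiniteGraph G) (w : V) (r : ℕ) :
    {v | G.dist v w ≤ r}.Finite := by
  induction r with
  | zero =>
    exact (Set.finite_singleton w).subset fun v hv =>
      ((hc v w).dist_eq_zero_iff).1 (Nat.le_zero.1 hv)
  | succ r ih =>
    refine (ih.union (ih.biUnion fun z _ => hlf z)).subset fun v hv => ?_
    obtain ⟨p, hp⟩ := hc.exists_walk_length_eq_dist v w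
    cases p with
    | nil => exact Or.inl (by simp)
    | @cons _ z _ hvz q =>
      have hz : G.dist z w ≤ r := by
        have := G.dist_le q
        simp only [SimpleGraph.Walk.length_cons] at hp
        simp only [Set.mem_ofPred_eq] at hv
        omega
      exact Or.inr (Set.mem_biUnion hz hvz.symm)

lemma collar_finite (hc : G.Connected) (hlf : LocallyFiniteGraph G) (κ : ℕ) {X : Set V}
    (hX : (edgeBoundary G X).Finite) : (collar G κ X).Finite := by
  classical
  refine ((hX.image Prod.fst).biUnion fun a _ => finite_setOf_dist_le hc hlf a κ).subset ?_
  rintro z ⟨⟨u, hu, hzu⟩, hz⟩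
  obtain ⟨p, hp⟩ := hc.exists_walk_length_eq_dist z u
  obtain ⟨d, hd, hd₁, hd₂⟩ := p.exists_boundary_dart Xᶜ hz (not_not.2 hu)
  have hzd := (G.dist_le (p.takeUntil d.snd (p.dart_snd_mem_support_of_mem_darts hd))).trans
    (p.length_takeUntil_le_length _)
  exact Set.mem_biUnion ⟨(d.snd, d.fst), ⟨d.adj.symm, not_not.1 hd₂, hd₁⟩, rfl⟩ (by
    simp only [Set.mem_ofPred_eq]
    omega)

/-- Every `k`-cut has a boundary edge, edges fall into finitely many orbits, and only finitely
many `k`-cuts separate the ends of a given edge. -/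
lemma exists_finite_transversal_isCutLe (hc : G.Connected) (horb : AutFinOrbits G) (k : ℕ) :
    ∃ ℱ : Set (Set V), ℱ.Finite ∧ (∀ X ∈ ℱ, IsCutLe G k X) ∧
      ∀ X, IsCutLe G k X → ∃ φ : G ≃g G, φ ⁻¹' X ∈ ℱ := by
  obtain ⟨E₀, hE₀, hrep⟩ := exists_finite_edge_transversal horb.2
  refine ⟨⋃ e ∈ E₀, {X | IsCutLe G k X ∧ (Quot.out e).1 ∈ X ∧ (Quot.out e).2 ∉ X} ∪
    {X | IsCutLe G k X ∧ (Quot.out e).2 ∈ X ∧ (Quot.out e).1 ∉ X},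
    hE₀.biUnion fun e _ =>
      (finite_setOf_isCutLe_sep k G _ _).union (finite_setOf_isCutLe_sep k G _ _),
    fun X hX => ?_, fun X hX => ?_⟩
  · obtain ⟨e, -, hX⟩ := Set.mem_iUnion₂.1 hX
    exact hX.elim And.left And.left
  obtain ⟨a, ha⟩ := hX.1.1
  obtain ⟨b, hb⟩ := hX.1.2.1
  obtain ⟨p⟩ := hc a b
  obtain ⟨d, -, hd₁, hd₂⟩ := p.exists_boundary_dart X ha hb
  obtain ⟨e, he, φ, hφ⟩ := hrep _ d.edge_mem
  refine ⟨φ, Set.mem_biUnion he ?_⟩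
  rw [← Quot.out_eq e] at hφ
  have hφ' : s(φ (Quot.out e).1, φ (Quot.out e).2) = s(d.fst, d.snd) := hφ
  rcases Sym2.eq_iff.1 hφ' with ⟨h₁, h₂⟩ | ⟨h₁, h₂⟩
  · exact Or.inl ⟨hX.preimage_iso φ, by simp [h₁, hd₁], by simp [h₂, hd₂]⟩
  · exact Or.inr ⟨hX.preimage_iso φ, by simp [h₂, hd₁], by simp [h₁, hd₂]⟩

lemma exists_dist_le_of_mem_collar (hc : G.Connected) (hlf : LocallyFiniteGraph G)
    (horb : AutFinOrbits G) (k κ : ℕ) :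
    ∃ ℓ : ℕ, ∀ X, IsCutLe G k X → ∀ x ∈ collar G κ X, ∀ y ∈ collar G κ X, G.dist x y ≤ ℓ := by
  obtain ⟨ℱ, hℱ, hℱk, hrep⟩ := exists_finite_transversal_isCutLe hc horb k
  have hpairs : (⋃ X ∈ ℱ, collar G κ X ×ˢ collar G κ X).Finite := hℱ.biUnion fun X hX =>
    have hfin := collar_finite hc hlf κ (hℱk X hX).1.2.2.2.2
    hfin.prod hfin
  obtain ⟨ℓ, hℓ⟩ := (hpairs.image fun q => G.dist q.1 q.2).bddAbove
  refine ⟨ℓ, fun X hX x hx y hy => ?_⟩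
  obtain ⟨φ, hφ⟩ := hrep X hX
  have hmem : ∀ z ∈ collar G κ X, φ.symm z ∈ collar G κ (φ ⁻¹' X) := fun z hz => by
    rw [← preimage_collar_iso]
    simpa using hz
  calc G.dist x y = G.dist (φ (φ.symm x)) (φ (φ.symm y)) := by simp
    _ = G.dist (φ.symm x) (φ.symm y) := dist_iso φ _ _
    _ ≤ ℓ := hℓ ⟨(φ.symm x, φ.symm y), Set.mem_biUnion hφ ⟨hmem x hx, hmem y hy⟩, rfl⟩

end Automorphisms

end CFGroups

open CFGroups Pointwise in
/-- Blocks are connected, and there is `ℓ ∈ ℕ` such that for every optimal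
cut `C` and every `S ⊆ B[C]`: any two vertices of `B[C] \ N^ℓS` that can be joined by a
path in `Γ − N^ℓS` can be joined by a path in `B[C] \ S`. -/
theorem blocks_connected_and_uniform_separation
    {V : Type u} (G : SimpleGraph V) (hconn : G.Connected)
    (hlf : CFGroups.LocallyFiniteGraph G)
    (k : ℕ) (hacc : CFGroups.AccessibleWith G k)
    (horb : CFGroups.AutFinOrbits G)
    (κ : ℕ) (hκ1 : 1 ≤ κ)
    (hκ : ∀ C ∈ CFGroups.COpt G k,
      (G.induce (CFGroups.nbhd G κ C ∩ Cᶜ)).Connected) :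
    (∀ C ∈ CFGroups.COpt G k, (G.induce (CFGroups.block G k κ C)).Connected) ∧
    ∃ ℓ : ℕ, ∀ C ∈ CFGroups.COpt G k, ∀ S ⊆ CFGroups.block G k κ C, ∀ u v : V,
      u ∈ CFGroups.block G k κ C \ CFGroups.nbhd G ℓ S →
      v ∈ CFGroups.block G k κ C \ CFGroups.nbhd G ℓ S →
      (∃ p : G.Walk u v, ∀ w ∈ p.support, w ∉ CFGroups.nbhd G ℓ S) →
      ∃ q : G.Walk u v, ∀ w ∈ q.support, w ∈ CFGroups.block G k κ C \ S := by
  obtain ⟨ℓ, hℓ⟩ := exists_dist_le_of_mem_collar hconn hlf horb k κ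
  have hreroute : ∀ C ∈ COpt G k, ∀ (S : Set V) {u v : V} (p : G.Walk u v),
      (∀ w ∈ p.support, w ∉ nbhd G ℓ S) → u ∈ block G k κ C → v ∈ block G k κ C →
      WalkIn G (block G k κ C \ S) u v :=
    fun C hC S _ _ p => walkIn_iInter_nbhd_diff hκ1 (pairwise_disjoint_compl_cls hconn hacc hC)
      (fun D hD => hκ D hD.1) (fun D hD => hℓ D (.of_mem_cOpt hacc hD.1)) p
  refine ⟨fun C hC => ?_, ℓ, fun C hC S _ u v hu hv ⟨p, hp⟩ => hreroute C hC S p hp hu.1 hv.1⟩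
  obtain ⟨z, hz⟩ := Set.nonempty_coe_sort.1 (hκ C hC).nonempty
  refine induce_connected_of_walkIn ⟨z, collar_subset_iInter_nbhd
    (pairwise_disjoint_compl_cls hconn hacc hC) ⟨hC, Or.inl rfl⟩ hz⟩ fun u hu v hv => ?_
  obtain ⟨p⟩ := hconn u v
  exact (hreroute C hC ∅ p (fun _ _ ⟨_, h, _⟩ => h) hu hv).mono Set.sdiff_subset
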